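/- Let G be a group, P a submonoid of G, and for p ∈ P let L_p be the isometry of ℓ²(P) determined by L_p δ_q = δ_{pq}. Let α = (p₁, p₂, …, p_{2k}) be an even-length word of elements of P (k ≥ 1) which is neutral, i.e. \mathring{α} = p₁p₂⁻¹⋯p_{2k-1}p_{2k}⁻¹ = e in G. Then L_{p₁}(L_{p₂})† ⋯ L_{p_{2k-1}}(L_{p_{2k}})† is the orthogonal projection of ℓ²(P) onto the closed linear span of { δ_s : s ∈ K(α) }. -/

import Mathlib

/-!
Each factor `L_p (L_q)†` sends `δ_x` to `δ_{p q⁻¹ x}` when `x ∈ qP` and kills it otherwise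
(`(L_q)†` is composition with the injection `r ↦ qr`). Peeling off the last pair of letters,
`L_α δ_x = δ_{\mathring{α} x}` when `x ∈ K(α)` and `L_α δ_x = 0` otherwise, because `K(α)` obeys the
same recursion. For a neutral word these are the values of the orthogonal projection onto the
closed span of `{δ_s : s ∈ K(α)}` on the orthonormal basis `(δ_x)`, and a bounded operator is
determined by them.
-/

/-- The iterated right quotient `\mathring{α} = p₁p₂⁻¹p₃p₄⁻¹⋯p_{2k-1}p_{2k}⁻¹` of the
even-length word `α = (p 1, p 2, …, p (2k))` (indices are `1`-based). -/
def wordQuotient {G : Type*} [Group G] (p : ℕ → G) (k : ℕ) : G :=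
  ((List.range k).map fun i => p (2 * i + 1) * (p (2 * i + 2))⁻¹).prod

/-- The element `g_j = p_{2k}p_{2k-1}⁻¹p_{2k-2}p_{2k-3}⁻¹⋯p_{2j+2}p_{2j+1}⁻¹p_{2j}`
(for `1 ≤ j ≤ k`), so that `g_k = p_{2k}`. -/
def wordG {G : Type*} [Group G] (p : ℕ → G) (k j : ℕ) : G :=
  ((List.range (k - j)).map fun i => p (2 * k - 2 * i) * (p (2 * k - 2 * i - 1))⁻¹).prod
    * p (2 * j)

/-- The constructible right ideal `K(α) = ⋂_{j=1}^{k} g_j P` of the word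
`α = (p 1, …, p (2k))`. -/
def wordK {G : Type*} [Group G] (P : Submonoid G) (p : ℕ → G) (k : ℕ) : Set G :=
  {x : G | ∀ j : ℕ, 1 ≤ j → j ≤ k → ∃ q ∈ P, x = wordG p k j * q}

/-- The operator `L_α = L_{p₁}(L_{p₂})† L_{p₃}(L_{p₄})† ⋯ L_{p_{2k-1}}(L_{p_{2k}})†` on
`ℓ²(P)` associated to the even-length word `α = (w 1, …, w (2k))` of elements of `P`. -/
noncomputable def wordOp {G : Type*} [Group G] (P : Submonoid G)
    (L : P → (lp (fun _ : P => ℂ) 2 →L[ℂ] lp (fun _ : P => ℂ) 2)) (w : ℕ → P) (k : ℕ) :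
    lp (fun _ : P => ℂ) 2 →L[ℂ] lp (fun _ : P => ℂ) 2 :=
  ((List.range k).map fun i =>
    L (w (2 * i + 1)) * ContinuousLinearMap.adjoint (L (w (2 * i + 2)))).prod

open scoped lp

section Orthonormal

variable {𝕜 E ι : Type*} [RCLike 𝕜] [NormedAddCommGroup E] [InnerProductSpace 𝕜 E]
  [CompleteSpace E] {v : ι → E}

theorem Orthonormal.starProjection_closure_span_image_apply (hv : Orthonormal 𝕜 v) (K : Set ι)
    (i : ι) [Decidable (i ∈ K)] :
    (Submodule.span 𝕜 (v '' K)).topologicalClosure.starProjection (v i) =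
      if i ∈ K then v i else 0 := by
  split_ifs with hi
  · exact Submodule.starProjection_eq_self_iff.2
      (Submodule.le_topologicalClosure _ (Submodule.subset_span ⟨i, hi, rfl⟩))
  · rw [Submodule.starProjection_apply_eq_zero_iff, Submodule.orthogonal_closure, ← Submodule.span_singleton_le_iff_mem,
      ← Submodule.isOrtho_iff_le, Submodule.isOrtho_span]
    rintro _ rfl _ ⟨j, hj, rfl⟩
    exact hv.inner_eq_zero fun hij => hi (hij ▸ hj)

end Orthonormal

namespace lp

variable {𝕜 ι : Type*} [RCLike 𝕜] [DecidableEq ι] {T : ℓ²(ι, 𝕜) →L[𝕜] ℓ²(ι, 𝕜)} {f : ι → ι}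

theorem adjoint_apply_of_apply_single (hT : ∀ i, T (lp.single 2 i 1) = lp.single 2 (f i) 1)
    (u : ℓ²(ι, 𝕜)) (i : ι) : T.adjoint u i = u (f i) := by
  have h := T.adjoint_inner_right (lp.single 2 i 1) u
  simpa [hT, lp.inner_single_left] using h

theorem adjoint_apply_single_apply (hT : ∀ i, T (lp.single 2 i 1) = lp.single 2 (f i) 1)
    (hf : f.Injective) (i : ι) : T.adjoint (lp.single 2 (f i) 1) = lp.single 2 i 1 := by
  ext j
  simp [adjoint_apply_of_apply_single hT, lp.single_apply, Pi.single_apply, hf.eq_iff]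

theorem adjoint_apply_single_eq_zero (hT : ∀ i, T (lp.single 2 i 1) = lp.single 2 (f i) 1)
    {x : ι} (hx : x ∉ Set.range f) : T.adjoint (lp.single 2 x 1) = 0 := by
  ext j
  have : f j ≠ x := fun h => hx ⟨j, h⟩
  simp [adjoint_apply_of_apply_single hT, lp.single_apply, this]

end lp

section Word

variable {G : Type*} [Group G]

theorem wordQuotient_succ (p : ℕ → G) (k : ℕ) :
    wordQuotient p (k + 1) = wordQuotient p k * (p (2 * k + 1) * (p (2 * k + 2))⁻¹) := by
  simp [wordQuotient, List.range_succ]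

theorem wordG_self (p : ℕ → G) (k : ℕ) : wordG p k k = p (2 * k) := by
  simp [wordG]

theorem wordG_succ (p : ℕ → G) {k j : ℕ} (hj : j ≤ k) :
    wordG p (k + 1) j = p (2 * k + 2) * (p (2 * k + 1))⁻¹ * wordG p k j := by
  have hlen : k + 1 - j = k - j + 1 := by omega
  have hshift : ∀ i, 2 * (k + 1) - 2 * (i + 1) = 2 * k - 2 * i := by omega
  simp only [wordG, hlen, List.range_succ_eq_map, List.map_cons, List.prod_cons, List.map_map,
    Function.comp_def, hshift, mul_assoc, mul_zero, Nat.sub_zero]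
  rfl

theorem mem_wordK_zero (P : Submonoid G) (p : ℕ → G) (x : G) : x ∈ wordK P p 0 :=
  fun _ hj hj0 => by omega

theorem wordG_succ_self (p : ℕ → G) (k : ℕ) : wordG p (k + 1) (k + 1) = p (2 * k + 2) :=
  wordG_self p (k + 1)

theorem mem_wordK_succ (P : Submonoid G) (p : ℕ → G) (k : ℕ) (x : G) :
    x ∈ wordK P p (k + 1) ↔
      (∃ q ∈ P, x = p (2 * k + 2) * q) ∧ p (2 * k + 1) * (p (2 * k + 2))⁻¹ * x ∈ wordK P p k := by
  have hshift (j : ℕ) (hj : j ≤ k) (q : G) :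
      x = wordG p (k + 1) j * q ↔ p (2 * k + 1) * (p (2 * k + 2))⁻¹ * x = wordG p k j * q := by
    rw [wordG_succ p hj]
    constructor <;> intro h
    · rw [h]; group
    · rw [mul_assoc, ← h]; group
  constructor
  · intro hx
    refine ⟨by simpa [wordG_succ_self] using hx (k + 1) (by omega) le_rfl, fun j hj hjk => ?_⟩
    obtain ⟨q, hq, hxq⟩ := hx j hj (by omega)
    exact ⟨q, hq, (hshift j hjk q).1 hxq⟩
  · rintro ⟨hlast, hx⟩ j hj hjk
    rcases Nat.lt_or_ge j (k + 1) with hjk | hjk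
    · obtain ⟨q, hq, hxq⟩ := hx j hj (by omega)
      exact ⟨q, hq, (hshift j (by omega) q).2 hxq⟩
    · obtain rfl : j = k + 1 := by omega
      simpa [wordG_succ_self] using hlast

end Word

section WordOp

variable {G : Type*} [Group G] (P : Submonoid G)
  {L : P → (ℓ²(P, ℂ) →L[ℂ] ℓ²(P, ℂ))}

theorem wordOp_succ (w : ℕ → P) (k : ℕ) :
    wordOp P L w (k + 1) = wordOp P L w k * (L (w (2 * k + 1)) * (L (w (2 * k + 2))).adjoint) := by
  simp [wordOp, List.range_succ]

variable [DecidableEq G] (hL : ∀ p q : P, L p (lp.single 2 q 1) = lp.single 2 (p * q) 1)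
include hL

theorem mul_adjoint_apply_single_mul (p q r : P) :
    (L p * (L q).adjoint) (lp.single 2 (q * r) 1) = lp.single 2 (p * r) 1 := by
  rw [mul_apply_eq_comp, lp.adjoint_apply_single_apply (hL q) (mul_right_injective q), hL]

theorem mul_adjoint_apply_single_eq_zero (p q x : P) (hx : ∀ r, q * r ≠ x) :
    (L p * (L q).adjoint) (lp.single 2 x 1) = 0 := by
  rw [mul_apply_eq_comp, lp.adjoint_apply_single_eq_zero (hL q) (by simpa using hx), map_zero]

theorem wordOp_apply_single_of_mem (w : ℕ → P) (k : ℕ) {x y : P}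
    (hx : (x : G) ∈ wordK P (fun i => (w i : G)) k)
    (hy : (y : G) = wordQuotient (fun i => (w i : G)) k * x) :
    wordOp P L w k (lp.single 2 x 1) = lp.single 2 y 1 := by
  induction k generalizing x with
  | zero => simp [wordOp, Subtype.ext (hy.trans (one_mul _))]
  | succ k ih =>
    obtain ⟨⟨q, hq, hxq⟩, hx'⟩ := (mem_wordK_succ P _ k x).1 hx
    obtain rfl : x = w (2 * k + 2) * ⟨q, hq⟩ := Subtype.ext hxq
    rw [wordOp_succ, mul_apply_eq_comp, mul_adjoint_apply_single_mul P hL]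
    refine ih ?_ ?_
    · convert hx' using 1
      push_cast
      group
    · rw [hy, wordQuotient_succ]
      push_cast
      group

theorem wordOp_apply_single_of_notMem (w : ℕ → P) (k : ℕ) {x : P}
    (hx : (x : G) ∉ wordK P (fun i => (w i : G)) k) :
    wordOp P L w k (lp.single 2 x 1) = 0 := by
  induction k generalizing x with
  | zero => exact absurd (mem_wordK_zero P _ x) hx
  | succ k ih =>
    rw [wordOp_succ, mul_apply_eq_comp]
    by_cases hrange : ∃ r, w (2 * k + 2) * r = x
    · obtain ⟨r, rfl⟩ := hrange
      rw [mul_adjoint_apply_single_mul P hL]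
      refine ih fun hmem => hx ((mem_wordK_succ P _ k _).2 ⟨⟨r, r.2, rfl⟩, ?_⟩)
      convert hmem using 1
      push_cast
      group
    · rw [mul_adjoint_apply_single_eq_zero P hL _ _ _ (not_exists.1 hrange), map_zero]

end WordOp

theorem stmt_7_general {G : Type*} [Group G] [DecidableEq G] (P : Submonoid G)
    (L : P → (lp (fun _ : P => ℂ) 2 →L[ℂ] lp (fun _ : P => ℂ) 2))
    (hL : ∀ p q : P, L p (lp.single 2 q 1) = lp.single 2 (p * q) 1)
    (k : ℕ) (w : ℕ → P)
    (hneutral : wordQuotient (fun i => (w i : G)) k = 1) :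
    wordOp P L w k =
      (Submodule.span ℂ {v : lp (fun _ : P => ℂ) 2 |
          ∃ s : P, (s : G) ∈ wordK P (fun i => (w i : G)) k ∧
            v = lp.single 2 s 1}).topologicalClosure.subtypeL ∘L
        Submodule.orthogonalProjectionOnto (Submodule.span ℂ {v : lp (fun _ : P => ℂ) 2 |
          ∃ s : P, (s : G) ∈ wordK P (fun i => (w i : G)) k ∧
            v = lp.single 2 s 1}).topologicalClosure := by
  classical
  let b : HilbertBasis P ℂ ℓ²(P, ℂ) := HilbertBasis.ofRepr (LinearIsometryEquiv.refl ℂ _)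
  have hb (s : P) : b s = lp.single 2 s 1 := (b.repr_symm_single s).symm
  have hK : {v : ℓ²(P, ℂ) | ∃ s : P, (s : G) ∈ wordK P (fun i => (w i : G)) k ∧
      v = lp.single 2 s 1} = b '' {s | (s : G) ∈ wordK P (fun i => (w i : G)) k} := by
    ext v
    simp [hb, eq_comm]
  rw [hK]
  refine ContinuousLinearMap.ext_on
    (Submodule.dense_iff_topologicalClosure_eq_top.2 b.dense_span) ?_
  rintro _ ⟨x, rfl⟩
  rw [← Submodule.starProjection, b.orthonormal.starProjection_closure_span_image_apply, hb]
  split_ifs with hx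
  · exact wordOp_apply_single_of_mem P hL w k hx (by rw [hneutral, one_mul])
  · exact wordOp_apply_single_of_notMem P hL w k hx

/-- Let `G` be a group, `P` a submonoid of `G`, and `L_p` the isometry of
`ℓ²(P)` determined by `L_p δ_q = δ_{pq}`.  Let `α = (w 1, …, w (2k))` be an even-length word
of elements of `P` (`k ≥ 1`) which is neutral, i.e. `\mathring{α} = e`.  Then
`L_{w 1}(L_{w 2})† ⋯ L_{w (2k-1)}(L_{w (2k)})†` is the orthogonal projection of `ℓ²(P)` onto
the closed linear span of `{δ_s : s ∈ K(α)}`. -/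
theorem stmt_7 {G : Type*} [Group G] [DecidableEq G] (P : Submonoid G)
    (L : P → (lp (fun _ : P => ℂ) 2 →L[ℂ] lp (fun _ : P => ℂ) 2))
    (hL : ∀ p q : P, L p (lp.single 2 q 1) = lp.single 2 (p * q) 1)
    (k : ℕ) (hk : 1 ≤ k) (w : ℕ → P)
    (hneutral : wordQuotient (fun i => (w i : G)) k = 1) :
    wordOp P L w k =
      (Submodule.span ℂ {v : lp (fun _ : P => ℂ) 2 |
          ∃ s : P, (s : G) ∈ wordK P (fun i => (w i : G)) k ∧
            v = lp.single 2 s 1}).topologicalClosure.subtypeL ∘L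
        Submodule.orthogonalProjectionOnto (Submodule.span ℂ {v : lp (fun _ : P => ℂ) 2 |
          ∃ s : P, (s : G) ∈ wordK P (fun i => (w i : G)) k ∧
            v = lp.single 2 s 1}).topologicalClosure :=
  stmt_7_general P L hL k w hneutral
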